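/- Let 𝒜 be an abelian category and 𝒞 a full additive subcategory. The bounded-above 𝒞-derived category D⁻_𝒞(𝒜) = K⁻(𝒜)/(K⁻(𝒜) ∩ K_{𝒞-ac}(𝒜)) is a (full) triangulated subcategory of D_𝒞(𝒜) = K(𝒜)/K_{𝒞-ac}(𝒜): for any 𝒞-quasi-isomorphism s : Y• → X• with X• bounded above, there exists a chain map f : Z• → Y• with Z• bounded above such that s∘f is a 𝒞-quasi-isomorphism. -/

import Mathlib

/-!
Truncate `Y` canonically at `n = m + 1`, where `X` vanishes above `m`. The inclusion
`τ≤n Y ⟶ Y` is a monomorphism in every degree and an isomorphism below `n`. Since `Hom(C, -)`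
preserves monomorphisms, `Hom(C, τ≤n Y) ⟶ Hom(C, Y)` is therefore a quasi-isomorphism below `n`
and injective on homology in degree `n`. Above `m` the complex `Hom(C, X)` is zero, so
`Hom(C, Y)` is exact there because `s` is a `𝒞`-quasi-isomorphism; hence `Hom(C, τ≤n Y)` is
exact in degree `n` by the injectivity, and above `n` because it vanishes.
-/

open CategoryTheory Limits

universe v u

variable {A : Type u} [Category.{v} A] [Abelian A]

/-- A complex `X` is `𝒞`-acyclic if `Hom_𝒜(C, X)` is an acyclic complex of abelian
groups for every `C ∈ 𝒞`. -/
def CAcyclic (𝒞 : Set A) (X : CochainComplex A ℤ) : Prop :=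
  ∀ C ∈ 𝒞, ∀ i : ℤ,
    (((preadditiveCoyoneda.obj (Opposite.op C)).mapHomologicalComplex
      (ComplexShape.up ℤ)).obj X).ExactAt i

/-- A chain map `f` is a `𝒞`-quasi-isomorphism if `Hom_𝒜(C, f)` is a quasi-isomorphism
for every `C ∈ 𝒞`. -/
def CQuasiIso (𝒞 : Set A) {X Y : CochainComplex A ℤ} (f : X ⟶ Y) : Prop :=
  ∀ C ∈ 𝒞, QuasiIso (((preadditiveCoyoneda.obj (Opposite.op C)).mapHomologicalComplex
      (ComplexShape.up ℤ)).map f)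

/-- A cochain complex is bounded above. -/
def BoundedAbove (X : CochainComplex A ℤ) : Prop :=
  ∃ n : ℤ, ∀ i : ℤ, n < i → IsZero (X.X i)

namespace CategoryTheory.ShortComplex

variable {C : Type*} [Category C] [Abelian C] {S₁ S₂ : ShortComplex C}

lemma exact_of_epi_τ₁_of_mono_τ₂ (φ : S₁ ⟶ S₂) [Epi φ.τ₁] [Mono φ.τ₂] (h₂ : S₂.Exact) :
    S₁.Exact := by
  rw [exact_iff_exact_up_to_refinements] at h₂ ⊢
  intro W x₂ hx₂
  obtain ⟨W', π, _, y₁, hy₁⟩ :=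
    h₂ (x₂ ≫ φ.τ₂) (by rw [Category.assoc, φ.comm₂₃, reassoc_of% hx₂, zero_comp])
  obtain ⟨W'', π', _, x₁, hx₁⟩ := surjective_up_to_refinements_of_epi φ.τ₁ y₁
  refine ⟨W'', π' ≫ π, epi_comp _ _, x₁, ?_⟩
  rw [← cancel_mono φ.τ₂, Category.assoc, Category.assoc, hy₁, reassoc_of% hx₁, φ.comm₁₂,
    Category.assoc]

end CategoryTheory.ShortComplex

namespace HomologicalComplex

variable {C : Type*} [Category C] [Abelian C] {ι : Type*} {c : ComplexShape ι}
  {K L : HomologicalComplex C c}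

lemma exactAt_of_epi_of_mono (φ : K ⟶ L) {i j k : ι} (hi : c.prev j = i) (hk : c.next j = k)
    [Epi (φ.f i)] [Mono (φ.f j)] (hL : L.ExactAt j) : K.ExactAt j := by
  rw [exactAt_iff' _ i j k hi hk] at hL ⊢
  let ψ := (shortComplexFunctor' C c i j k).map φ
  have : Epi ψ.τ₁ := ‹Epi (φ.f i)›
  have : Mono ψ.τ₂ := ‹Mono (φ.f j)›
  exact ShortComplex.exact_of_epi_τ₁_of_mono_τ₂ ψ hL

lemma quasiIsoAt_of_epi_of_isIso_of_mono (φ : K ⟶ L) {i j k : ι} (hi : c.prev j = i)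
    (hk : c.next j = k) [Epi (φ.f i)] [IsIso (φ.f j)] [Mono (φ.f k)] : QuasiIsoAt φ j := by
  rw [quasiIsoAt_iff' φ i j k hi hk]
  let ψ := (shortComplexFunctor' C c i j k).map φ
  have : Epi ψ.τ₁ := ‹Epi (φ.f i)›
  have : IsIso ψ.τ₂ := ‹IsIso (φ.f j)›
  have : Mono ψ.τ₃ := ‹Mono (φ.f k)›
  exact ShortComplex.quasiIso_of_epi_of_isIso_of_mono ψ

variable {ι' : Type*} {c' : ComplexShape ι'} (K : HomologicalComplex C c') (e : c.Embedding c')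
  [e.IsTruncLE]

lemma isIso_ιTruncLE_f {i : ι} {i' : ι'} (hi' : e.f i = i') (hi : ¬ e.BoundaryLE i) :
    IsIso ((K.ιTruncLE e).f i') := by
  have : IsIso ((K.op.πTruncGE e.op).f i') :=
    (e.op.isIso_liftExtend_f_iff _ _ hi').2 (K.op.isIso_restrictionToTruncGE' e.op i hi)
  exact inferInstanceAs (IsIso ((K.op.πTruncGE e.op).f i').unop)

end HomologicalComplex

namespace CochainComplex

lemma isIso_ιTruncLE_f (K : CochainComplex A ℤ) {n i : ℤ} (hi : i < n) :
    IsIso ((K.ιTruncLE n).f i) :=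
  HomologicalComplex.isIso_ιTruncLE_f K (ComplexShape.embeddingUpIntLE n) (i := (n - i).natAbs)
    (by simp [Int.natAbs_of_nonneg (sub_nonneg.2 hi.le)])
    (by rw [ComplexShape.boundaryLE_embeddingUpIntLE_iff]; omega)

instance (K : CochainComplex A ℤ) (n i : ℤ) : Mono ((K.ιTruncLE n).f i) :=
  inferInstanceAs (Mono ((HomologicalComplex.ιTruncLE K _).f i))

variable {B : Type*} [Category B] [Abelian B] (G : A ⥤ B) [G.Additive] [G.PreservesMonomorphisms]

lemma quasiIsoAt_mapHomologicalComplex_ιTruncLE (K : CochainComplex A ℤ) {n i : ℤ}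
    (hi : i < n) : QuasiIsoAt ((G.mapHomologicalComplex _).map (K.ιTruncLE n)) i := by
  let φ := (G.mapHomologicalComplex _).map (K.ιTruncLE n)
  have : IsIso ((K.ιTruncLE n).f (i - 1)) := K.isIso_ιTruncLE_f (by omega)
  have : IsIso ((K.ιTruncLE n).f i) := K.isIso_ιTruncLE_f hi
  have : Epi (φ.f (i - 1)) := inferInstanceAs (Epi (G.map _))
  have : IsIso (φ.f i) := inferInstanceAs (IsIso (G.map _))
  have : Mono (φ.f (i + 1)) := inferInstanceAs (Mono (G.map _))
  exact HomologicalComplex.quasiIsoAt_of_epi_of_isIso_of_mono φ (i := i - 1) (k := i + 1)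
    (by simp) (by simp)

lemma exactAt_mapHomologicalComplex_truncLE (K : CochainComplex A ℤ) (n : ℤ)
    (hK : ((G.mapHomologicalComplex _).obj K).ExactAt n) :
    ((G.mapHomologicalComplex _).obj (K.truncLE n)).ExactAt n := by
  let φ := (G.mapHomologicalComplex _).map (K.ιTruncLE n)
  have : IsIso ((K.ιTruncLE n).f (n - 1)) := K.isIso_ιTruncLE_f (by omega)
  have : Epi (φ.f (n - 1)) := inferInstanceAs (Epi (G.map _))
  have : Mono (φ.f n) := inferInstanceAs (Mono (G.map _))
  exact HomologicalComplex.exactAt_of_epi_of_mono φ (i := n - 1) (k := n + 1)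
    (by simp) (by simp) hK

lemma quasiIso_mapHomologicalComplex_ιTruncLE_comp {X Y : CochainComplex A ℤ} (s : Y ⟶ X)
    (m : ℤ) [X.IsStrictlyLE m] [QuasiIso ((G.mapHomologicalComplex _).map s)] :
    QuasiIso ((G.mapHomologicalComplex _).map (Y.ιTruncLE (m + 1) ≫ s)) := by
  rw [quasiIso_iff, Functor.map_comp]
  intro i
  rcases lt_or_ge i (m + 1) with hi | hi
  · have := quasiIsoAt_mapHomologicalComplex_ιTruncLE G Y hi
    infer_instance
  · have hX : ((G.mapHomologicalComplex _).obj X).ExactAt i :=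
      exactAt_of_isLE _ m i
    rw [quasiIsoAt_iff_exactAt' _ i hX]
    rcases hi.eq_or_lt with rfl | hi
    · exact exactAt_mapHomologicalComplex_truncLE G Y _
        ((quasiIsoAt_iff_exactAt' ((G.mapHomologicalComplex _).map s) _ hX).1 inferInstance)
    · exact exactAt_of_isLE _ (m + 1) i

end CochainComplex

/-- `D⁻_𝒞(𝒜)` is a full triangulated subcategory of `D_𝒞(𝒜)`: for any
`𝒞`-quasi-isomorphism `s : Y• → X•` with `X•` bounded above, there is a chain map
`f : Z• → Y•` with `Z•` bounded above such that `s ∘ f` is a `𝒞`-quasi-isomorphism. -/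
theorem stmt7 (𝒞 : Set A) (X Y : CochainComplex A ℤ) (s : Y ⟶ X)
    (hs : CQuasiIso 𝒞 s) (hX : BoundedAbove X) :
    ∃ (Z : CochainComplex A ℤ) (f : Z ⟶ Y), BoundedAbove Z ∧ CQuasiIso 𝒞 (f ≫ s) := by
  obtain ⟨m, hm⟩ := hX
  have : X.IsStrictlyLE m := (X.isStrictlyLE_iff m).2 hm
  refine ⟨Y.truncLE (m + 1), Y.ιTruncLE (m + 1),
    ⟨m + 1, (CochainComplex.isStrictlyLE_iff _ _).1 inferInstance⟩, fun C hC => ?_⟩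
  have := hs C hC
  exact CochainComplex.quasiIso_mapHomologicalComplex_ιTruncLE_comp _ s m
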